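/- For all real numbers p and γ with 0 < p < 1, 0 < γ < 1, and p ≠ γ, we have d(p‖γ) ≤ (2/(γ·(1−γ)))·d*(p,γ). -/

import Mathlib

/-!
Both inequalities pass through the squared distance `(p - γ)²`. From above, `log x ≤ x - 1`
bounds `d(p‖γ)` by the χ²-divergence `(p - γ)² / (γ(1 - γ))`. From below, Pinsker's inequality
`2(z - q)² ≤ d(z‖q)` applied at `q = p` and `q = γ` gives
`(p - γ)² ≤ 2(z - p)² + 2(z - γ)² ≤ d(z‖p) + d(z‖γ) = 2 d(z‖p)`.
-/

/-- Kullback–Leibler divergence between two Bernoulli distributions with means `p` and `q`. -/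
noncomputable def klBer (p q : ℝ) : ℝ :=
  p * Real.log (p / q) + (1 - p) * Real.log ((1 - p) / (1 - q))

open Real Set Filter

theorem isMinOn_of_hasDerivAt_of_sign {s : Set ℝ} [hs : s.OrdConnected] {f f' : ℝ → ℝ} {z : ℝ}
    (hz : z ∈ s) (hf : ∀ t ∈ s, HasDerivAt f (f' t) t)
    (hsign : ∀ t ∈ s, 0 ≤ (t - z) * f' t) : IsMinOn f s z := by
  intro t ht
  have hcont : ∀ {a b}, Icc a b ⊆ s → ContinuousOn f (Icc a b) := fun hsub x hx =>
    (hf x (hsub hx)).continuousAt.continuousWithinAt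
  have hderiv : ∀ {a b}, Icc a b ⊆ s →
      ∀ x ∈ interior (Icc a b), HasDerivWithinAt f (f' x) (interior (Icc a b)) x :=
    fun hsub x hx => (hf x (hsub (interior_subset hx))).hasDerivWithinAt
  rcases le_total z t with h | h
  · have hsub := hs.out hz ht
    refine monotoneOn_of_hasDerivWithinAt_nonneg (convex_Icc z t) (hcont hsub) (hderiv hsub)
      (fun x hx => ?_) (left_mem_Icc.2 h) (right_mem_Icc.2 h) h
    rw [interior_Icc] at hx
    exact nonneg_of_mul_nonneg_right (hsign x (hsub (Ioo_subset_Icc_self hx))) (sub_pos.2 hx.1)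
  · have hsub := hs.out ht hz
    refine antitoneOn_of_hasDerivWithinAt_nonpos (convex_Icc t z) (hcont hsub) (hderiv hsub)
      (fun x hx => ?_) (left_mem_Icc.2 h) (right_mem_Icc.2 h) h
    rw [interior_Icc] at hx
    exact nonpos_of_mul_nonneg_right (hsign x (hsub (Ioo_subset_Icc_self hx))) (sub_neg.2 hx.2)

theorem klBer_self (p : ℝ) : klBer p p = 0 := by
  simp [klBer]

theorem mul_log_div_le {x y : ℝ} (hx : 0 ≤ x) (hy : 0 < y) :
    x * log (x / y) ≤ x * (x / y - 1) := by
  rcases hx.eq_or_lt with rfl | hx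
  · simp
  · exact mul_le_mul_of_nonneg_left (log_le_sub_one_of_pos (by positivity)) hx.le

theorem klBer_le_sq_div {p γ : ℝ} (hp0 : 0 ≤ p) (hp1 : p ≤ 1) (hγ0 : 0 < γ) (hγ1 : γ < 1) :
    klBer p γ ≤ (p - γ) ^ 2 / (γ * (1 - γ)) := by
  have hγ1' : 0 < 1 - γ := sub_pos.2 hγ1
  calc klBer p γ ≤ p * (p / γ - 1) + (1 - p) * ((1 - p) / (1 - γ) - 1) :=
        add_le_add (mul_log_div_le hp0 hγ0) (mul_log_div_le (sub_nonneg.2 hp1) hγ1')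
    _ = (p - γ) ^ 2 / (γ * (1 - γ)) := by
        field_simp
        ring

theorem hasDerivAt_klBer_right {z q : ℝ} (hz0 : 0 < z) (hz1 : z < 1) (hq0 : 0 < q)
    (hq1 : q < 1) : HasDerivAt (klBer z) ((q - z) / (q * (1 - q))) q := by
  have hlog : ∀ t ∈ Ioo (0 : ℝ) 1, klBer z t =
      z * log z + (1 - z) * log (1 - z) - (z * log t + (1 - z) * log (1 - t)) := by
    rintro t ⟨ht0, ht1⟩
    rw [klBer, log_div hz0.ne' ht0.ne', log_div (by linarith) (by linarith)]
    ring
  have hq1' : 1 - q ≠ 0 := by linarith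
  have hder := ((hasDerivAt_log hq0.ne').const_mul z).add
    ((((hasDerivAt_id' q).const_sub 1).log hq1').const_mul (1 - z))
  refine (hder.const_sub _).congr_of_eventuallyEq
    (eventually_of_mem (Ioo_mem_nhds hq0 hq1) hlog) |>.congr_deriv ?_
  field_simp
  ring

/-- Pinsker's inequality for Bernoulli distributions. -/
theorem two_mul_sq_sub_le_klBer {z q : ℝ} (hz0 : 0 < z) (hz1 : z < 1) (hq0 : 0 < q)
    (hq1 : q < 1) : 2 * (z - q) ^ 2 ≤ klBer z q := by
  have hder : ∀ t ∈ Ioo (0 : ℝ) 1, HasDerivAt (fun t => klBer z t - 2 * (z - t) ^ 2)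
      ((t - z) / (t * (1 - t)) + 4 * (z - t)) t := fun t ht =>
    ((hasDerivAt_klBer_right hz0 hz1 ht.1 ht.2).sub
      ((((hasDerivAt_id' t).const_sub z).pow 2).const_mul 2)).congr_deriv (by ring)
  have hsign : ∀ t ∈ Ioo (0 : ℝ) 1, 0 ≤ (t - z) * ((t - z) / (t * (1 - t)) + 4 * (z - t)) := by
    rintro t ⟨ht0, ht1⟩
    have ht1' : 0 < 1 - t := sub_pos.2 ht1
    have hfactor : (t - z) * ((t - z) / (t * (1 - t)) + 4 * (z - t))
        = (t - z) ^ 2 * (1 - 2 * t) ^ 2 / (t * (1 - t)) := by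
      field_simp
      ring
    rw [hfactor]
    positivity
  have hmin := isMinOn_iff.1
    (isMinOn_of_hasDerivAt_of_sign (s := Ioo 0 1) ⟨hz0, hz1⟩ hder hsign) q ⟨hq0, hq1⟩
  simp only [klBer_self, sub_self] at hmin
  linarith

theorem stmt3_general (p γ : ℝ) (hp0 : 0 < p) (hp1 : p < 1) (hγ0 : 0 < γ) (hγ1 : γ < 1)
    (z : ℝ) (hz1 : min p γ < z) (hz2 : z < max p γ) (hz : klBer z p = klBer z γ) :
    klBer p γ ≤ (2 / (γ * (1 - γ))) * klBer z p := by
  have hz0 : 0 < z := lt_of_le_of_lt (le_min hp0.le hγ0.le) hz1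
  have hz1' : z < 1 := lt_of_lt_of_le hz2 (max_le hp1.le hγ1.le)
  have hden : 0 < γ * (1 - γ) := mul_pos hγ0 (sub_pos.2 hγ1)
  calc klBer p γ ≤ (p - γ) ^ 2 / (γ * (1 - γ)) := klBer_le_sq_div hp0.le hp1.le hγ0 hγ1
    _ ≤ (2 * (z - p) ^ 2 + 2 * (z - γ) ^ 2) / (γ * (1 - γ)) := by
        gcongr
        nlinarith [sq_nonneg (2 * z - p - γ)]
    _ ≤ (klBer z p + klBer z γ) / (γ * (1 - γ)) := by
        gcongr
        · exact two_mul_sq_sub_le_klBer hz0 hz1' hp0 hp1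
        · exact two_mul_sq_sub_le_klBer hz0 hz1' hγ0 hγ1
    _ = (2 / (γ * (1 - γ))) * klBer z p := by
        rw [← hz]
        ring

/-- For `p ≠ γ` in `(0,1)`, `d(p‖γ) ≤ (2/(γ(1−γ))) d*(p,γ)`, where the Chernoff information
`d*(p,γ)` equals `d(z‖p)` for the unique `z` strictly between `p` and `γ` satisfying
`d(z‖p) = d(z‖γ)`. -/
theorem stmt3 (p γ : ℝ) (hp0 : 0 < p) (hp1 : p < 1) (hγ0 : 0 < γ) (hγ1 : γ < 1)
    (hne : p ≠ γ)
    (z : ℝ) (hz1 : min p γ < z) (hz2 : z < max p γ) (hz : klBer z p = klBer z γ) :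
    klBer p γ ≤ (2 / (γ * (1 - γ))) * klBer z p :=
  stmt3_general p γ hp0 hp1 hγ0 hγ1 z hz1 hz2 hz
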